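/- For finite sets S, T, U, the Jaccard distance 1 - J satisfies the triangle inequality: 1 - J(S,U) ≤ (1 - J(S,T)) + (1 - J(T,U)), where J(A,B) = |A ∩ B|/|A ∪ B| and by convention J(∅,∅) = 1. -/
import Mathlib


open Finset

def jaccard {α : Type*} [DecidableEq α] (S T : Finset α) : ℚ :=
  (S ∩ T).card / (S ∪ T).card

def jaccard' {α : Type*} [DecidableEq α] (S T : Finset α) : ℚ :=
  if S ∪ T = ∅ then 1 else jaccard S T

lemma jaccard'_le_one {α : Type*} [DecidableEq α] (S T : Finset α) :
    jaccard' S T ≤ 1 := by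
  unfold jaccard' jaccard
  split_ifs with h
  · exact le_refl 1
  · have hpos : (0:ℚ) < (S ∪ T).card := by
      exact_mod_cast Finset.card_pos.mpr (Finset.nonempty_iff_ne_empty.mpr h)
    rw [div_le_one hpos]
    exact_mod_cast Finset.card_le_card Finset.inter_subset_union

lemma one_sub_jaccard' {α : Type*} [DecidableEq α] (A B : Finset α) (h : A ∪ B ≠ ∅) :
    1 - jaccard' A B = (((A ∪ B) \ (A ∩ B)).card : ℚ) / (A ∪ B).card := by
  have hle := Finset.card_le_card (Finset.inter_subset_union (s := A) (t := B))
  have hpos : (0:ℚ) < (A ∪ B).card := by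
    exact_mod_cast Finset.card_pos.mpr (Finset.nonempty_iff_ne_empty.mpr h)
  rw [jaccard', if_neg h, jaccard, Finset.card_sdiff_of_subset Finset.inter_subset_union,
    Nat.cast_sub hle]
  field_simp

theorem stmt_17 {α : Type*} [DecidableEq α] (S T U : Finset α) :
    1 - jaccard' S U ≤ (1 - jaccard' S T) + (1 - jaccard' T U) := by
  classical
  by_cases hSU : S ∪ U = ∅
  · rw [jaccard', if_pos hSU]
    have h1 := jaccard'_le_one S T
    have h2 := jaccard'_le_one T U
    linarith
  by_cases hST : S ∪ T = ∅
  · rw [Finset.union_eq_empty] at hST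
    obtain ⟨rfl, rfl⟩ := hST
    simp
    exact jaccard'_le_one _ _
  by_cases hTU : T ∪ U = ∅
  · rw [Finset.union_eq_empty] at hTU
    obtain ⟨rfl, rfl⟩ := hTU
    simp
    exact jaccard'_le_one _ _
  -- main case
  rw [one_sub_jaccard' S U hSU, one_sub_jaccard' S T hST, one_sub_jaccard' T U hTU]
  set a : ℕ := ((S ∪ U) \ (S ∩ U)).card with ha
  set b : ℕ := ((S ∪ T) \ (S ∩ T)).card with hb
  set c : ℕ := ((T ∪ U) \ (T ∩ U)).card with hc
  set k : ℕ := (T \ (S ∪ U)).card with hk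
  have hkey : a + k ≤ b + c := by
    have hdisj : Disjoint ((S ∪ U) \ (S ∩ U)) (T \ (S ∪ U)) :=
      Finset.disjoint_sdiff.mono_left Finset.sdiff_subset
    have hsub : ((S ∪ U) \ (S ∩ U)) ∪ (T \ (S ∪ U)) ⊆
        ((S ∪ T) \ (S ∩ T)) ∪ ((T ∪ U) \ (T ∩ U)) := by
      intro x hx
      simp only [Finset.mem_union, Finset.mem_sdiff, Finset.mem_inter] at hx ⊢
      tauto
    calc a + k = (((S ∪ U) \ (S ∩ U)) ∪ (T \ (S ∪ U))).card :=
          (Finset.card_union_of_disjoint hdisj).symm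
      _ ≤ (((S ∪ T) \ (S ∩ T)) ∪ ((T ∪ U) \ (T ∩ U))).card := Finset.card_le_card hsub
      _ ≤ b + c := Finset.card_union_le _ _
  have hN : (S ∪ U).card + k = (S ∪ T ∪ U).card := by
    rw [← Finset.card_union_of_disjoint Finset.disjoint_sdiff]
    congr 1
    ext x
    simp only [Finset.mem_union, Finset.mem_sdiff]
    tauto
  have hau : a ≤ (S ∪ U).card := Finset.card_le_card Finset.sdiff_subset
  have h2N : (S ∪ T).card ≤ (S ∪ T ∪ U).card :=
    Finset.card_le_card (Finset.union_subset_union_right Finset.subset_union_left |>.trans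
      (by rw [Finset.union_assoc]))
  have h3N : (T ∪ U).card ≤ (S ∪ T ∪ U).card := by
    apply Finset.card_le_card
    rw [Finset.union_assoc]
    exact Finset.subset_union_right
  have p1 : (0:ℚ) < (S ∪ U).card := by
    exact_mod_cast Finset.card_pos.mpr (Finset.nonempty_iff_ne_empty.mpr hSU)
  have p2 : (0:ℚ) < (S ∪ T).card := by
    exact_mod_cast Finset.card_pos.mpr (Finset.nonempty_iff_ne_empty.mpr hST)
  have p3 : (0:ℚ) < (T ∪ U).card := by
    exact_mod_cast Finset.card_pos.mpr (Finset.nonempty_iff_ne_empty.mpr hTU)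
  have pN : (0:ℚ) < (S ∪ T ∪ U).card := by
    push_cast [← hN]
    positivity
  have hkQ : (0:ℚ) ≤ (k:ℚ) := by positivity
  have hauQ : (a:ℚ) ≤ (S ∪ U).card := by exact_mod_cast hau
  calc (a:ℚ) / (S ∪ U).card
      ≤ ((a:ℚ) + k) / (((S ∪ U).card : ℚ) + k) := by
        rw [div_le_div_iff₀ p1 (by linarith)]
        nlinarith
    _ = ((a:ℚ) + k) / (S ∪ T ∪ U).card := by
        congr 1
        exact_mod_cast congrArg (Nat.cast (R := ℚ)) hN
    _ ≤ ((b:ℚ) + c) / (S ∪ T ∪ U).card := by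
        have h : (a:ℚ) + k ≤ (b:ℚ) + c := by exact_mod_cast hkey
        rw [div_le_div_iff₀ pN pN]
        nlinarith
    _ = (b:ℚ) / (S ∪ T ∪ U).card + (c:ℚ) / (S ∪ T ∪ U).card := add_div _ _ _
    _ ≤ (b:ℚ) / (S ∪ T).card + (c:ℚ) / (T ∪ U).card := by
        gcongr
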